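/- arXiv:2106.08396 — 6 statements merged into one kernel-verified Lean document; each statement's English description precedes it below -/
import Mathlib

section
/- Let k ≥ 1 be an integer and for i = 0,…,k define a_i = (−1)^i · C(k,i) / (2^{k−1} · (k+i)), where C(k,i) denotes the binomial coefficient. Then for every integer r with 1 ≤ r ≤ k, the weighted power sum vanishes: ∑_{i=0}^{k} a_i · (k+i)^r = 0. -/
/-!
Multiplying by `k + i` cancels the denominator of `a_i`, so up to the factor `2^(1-k)` the sum is
`∑ (-1)^i C(k,i) (k+i)^(r-1)`, which is `± Δ^k (x ↦ x^(r-1))` at `x = k`: a `k`-th forward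
difference of a polynomial of degree `r - 1 < k`, hence zero.
-/

open Finset

theorem sum_neg_one_pow_mul_choose_mul_add_pow_eq_zero {R : Type*} [CommRing R] {j n : ℕ}
    (h : j < n) (y : R) :
    ∑ i ∈ range (n + 1), (-1) ^ i * (n.choose i : R) * (y + i) ^ j = 0 := by
  have hdiff := fwdDiff_iter_eq_sum_shift 1 (fun r : R ↦ r ^ j) n y
  rw [fwdDiff_iter_pow_eq_zero_of_lt h, Pi.zero_apply] at hdiff
  calc ∑ i ∈ range (n + 1), (-1) ^ i * (n.choose i : R) * (y + i) ^ j
      = (-1) ^ n * ∑ i ∈ range (n + 1), ((-1 : ℤ) ^ (n - i) * n.choose i) • (y + i • 1) ^ j := by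
        rw [mul_sum]
        refine sum_congr rfl fun i hi ↦ ?_
        obtain ⟨d, rfl⟩ := Nat.exists_eq_add_of_le (Nat.lt_succ_iff.mp (mem_range.mp hi))
        have hsign : (-1 : R) ^ (i + d) * (-1) ^ d = (-1) ^ i := by
          rw [pow_add, mul_assoc, ← pow_add, Even.neg_one_pow ⟨d, rfl⟩, mul_one]
        rw [Nat.add_sub_cancel_left, zsmul_eq_mul, nsmul_one]
        push_cast
        linear_combination (-((i + d).choose i : R) * (y + i) ^ j) * hsign
    _ = 0 := by rw [← hdiff, mul_zero]

theorem weighted_power_sum_vanishes_general (k : ℕ) (r : ℕ) (hr1 : 1 ≤ r) (hrk : r ≤ k) :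
    ∑ i ∈ Finset.range (k + 1),
      ((-1 : ℝ) ^ i * (k.choose i) / (2 ^ (k - 1) * (k + i))) * ((k : ℝ) + i) ^ r = 0 := by
  obtain ⟨m, rfl⟩ := Nat.exists_eq_add_of_le' hr1
  have hk : (0 : ℝ) < k := by exact_mod_cast (by omega : 0 < k)
  have hterm (i : ℕ) : (-1 : ℝ) ^ i * k.choose i / (2 ^ (k - 1) * (k + i)) * (k + i) ^ (m + 1)
      = (2 ^ (k - 1))⁻¹ * ((-1) ^ i * k.choose i * (k + i) ^ m) := by
    have : (k : ℝ) + i ≠ 0 := by positivity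
    field_simp
    ring
  simp_rw [hterm, ← mul_sum]
  rw [sum_neg_one_pow_mul_choose_mul_add_pow_eq_zero hrk, mul_zero]

/-- Moment-matching: for `a i = (-1)^i * C(k,i) / (2^(k-1) * (k+i))` and `1 ≤ r ≤ k`,
the weighted power sum `∑_{i=0}^k a i * (k+i)^r` vanishes. -/
theorem weighted_power_sum_vanishes (k : ℕ) (hk : 1 ≤ k) (r : ℕ) (hr1 : 1 ≤ r) (hrk : r ≤ k) :
    ∑ i ∈ Finset.range (k + 1),
      ((-1 : ℝ) ^ i * (k.choose i) / (2 ^ (k - 1) * (k + i))) * ((k : ℝ) + i) ^ r = 0 :=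
  weighted_power_sum_vanishes_general k r hr1 hrk
end

section
/- Let k ≥ 1 be an integer, for i = 0,…,k define a_i = (−1)^i · C(k,i) / (2^{k−1} · (k+i)), and define ε_k = 1 / (k · 2^{k−1} · C(2k,k)). Then ∑_{i=0}^{k} a_i = ε_k. -/
/-!
By Pascal's rule and induction on `k`, `∑ᵢ (-1)^i C(k,i) / (x + i)` is the partial fraction
expansion of `k! / (x (x + 1) ⋯ (x + k))`. At `x = k` the denominator is
`k (k + 1) ⋯ (2k) = k · k! · C(2k, k)`.
-/

open Finset Nat Polynomial

theorem Finset.sum_range_succ_neg_one_pow_mul_choose {R : Type*} [CommRing R] (f : ℕ → R)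
    (k : ℕ) :
    ∑ i ∈ range (k + 2), (-1) ^ i * ((k + 1).choose i : R) * f i =
      ∑ i ∈ range (k + 1), (-1) ^ i * (k.choose i : R) * (f i - f (i + 1)) := by
  have pascal : ∀ i ∈ range (k + 1),
      (-1) ^ (i + 1) * ((k + 1).choose (i + 1) : R) * f (i + 1) =
        (-1) ^ (i + 1) * (k.choose (i + 1) : R) * f (i + 1) -
          (-1) ^ i * (k.choose i : R) * f (i + 1) := fun i _ => by
    rw [choose_succ_succ', cast_add]
    ring
  have drop_last : ∑ i ∈ range (k + 2), (-1) ^ i * (k.choose i : R) * f i =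
      ∑ i ∈ range (k + 1), (-1) ^ i * (k.choose i : R) * f i := by
    simp [sum_range_succ _ (k + 1), choose_succ_self]
  simp only [mul_sub, sum_sub_distrib]
  rw [sum_range_succ', sum_congr rfl pascal, sum_sub_distrib, ← drop_last,
    sum_range_succ' _ (k + 1)]
  simp only [pow_zero, choose_zero_right, cast_one, one_mul]
  ring

theorem ascPochhammer_eval_succ_left {S : Type*} [CommSemiring S] (n : ℕ) (x : S) :
    (ascPochhammer S (n + 1)).eval x = x * (ascPochhammer S n).eval (x + 1) := by
  simp [ascPochhammer_succ_left, eval_comp]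

theorem sum_range_neg_one_pow_mul_choose_div {K : Type*} [Field K] (k : ℕ) (x : K)
    (hx : (ascPochhammer K (k + 1)).eval x ≠ 0) :
    ∑ i ∈ range (k + 1), (-1) ^ i * (k.choose i : K) / (x + i) =
      k ! / (ascPochhammer K (k + 1)).eval x := by
  induction k generalizing x with
  | zero => simp
  | succ k ih =>
    have h_right := ascPochhammer_succ_eval (k + 1) x
    have h_left := ascPochhammer_eval_succ_left (k + 1) x
    have hx₀ : (ascPochhammer K (k + 1)).eval x ≠ 0 := by
      rw [h_right] at hx; exact left_ne_zero_of_mul hx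
    have hx₁ : (ascPochhammer K (k + 1)).eval (x + 1) ≠ 0 := by
      rw [h_left] at hx; exact right_ne_zero_of_mul hx
    have shift : ∀ i : ℕ, x + ((i + 1 : ℕ) : K) = x + 1 + i := fun i => by push_cast; ring
    simp_rw [div_eq_mul_inv _ (x + _), sum_range_succ_neg_one_pow_mul_choose, shift, mul_sub,
      sum_sub_distrib, ← div_eq_mul_inv]
    rw [ih x hx₀, ih (x + 1) hx₁, div_sub_div _ _ hx₀ hx₁, div_eq_div_iff (mul_ne_zero hx₀ hx₁) hx, factorial_succ]
    push_cast at h_right ⊢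
    linear_combination (k ! * (ascPochhammer K (k + 1)).eval (x + 1)) * h_right -
      (k ! * (ascPochhammer K (k + 1)).eval x) * h_left

theorem Nat.ascFactorial_succ_self (k : ℕ) :
    k.ascFactorial (k + 1) = k * k ! * (2 * k).choose k := by
  rw [add_comm, ← ascFactorial_mul_ascFactorial, ascFactorial_eq_factorial_mul_choose, two_mul]
  simp [ascFactorial_succ, mul_assoc]

/-- For `a i = (-1)^i * C(k,i) / (2^(k-1) * (k+i))` one has
`∑_{i=0}^k a i = 1 / (k * 2^(k-1) * C(2k,k))`. -/
theorem sum_a_eq_eps (k : ℕ) (hk : 1 ≤ k) :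
    ∑ i ∈ Finset.range (k + 1),
      (-1 : ℝ) ^ i * (k.choose i) / (2 ^ (k - 1) * (k + i)) =
      1 / (k * 2 ^ (k - 1) * ((2 * k).choose k)) := by
  have hP_pos : 0 < (ascPochhammer ℝ (k + 1)).eval (k : ℝ) :=
    ascPochhammer_pos _ _ (by exact_mod_cast hk)
  have hP : (ascPochhammer ℝ (k + 1)).eval (k : ℝ) = k * k ! * (2 * k).choose k := by
    rw [← Nat.cast_ascFactorial, ascFactorial_succ_self, cast_mul, cast_mul]
  calc ∑ i ∈ range (k + 1), (-1 : ℝ) ^ i * (k.choose i) / (2 ^ (k - 1) * (k + i))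
      = (2 ^ (k - 1))⁻¹ * ∑ i ∈ range (k + 1), (-1 : ℝ) ^ i * (k.choose i) / (k + i) := by
        rw [mul_sum]
        exact sum_congr rfl fun i _ => by rw [div_mul_eq_div_div_swap, div_eq_inv_mul]
    _ = (2 ^ (k - 1))⁻¹ * (k ! / (k * k ! * (2 * k).choose k)) := by
        rw [sum_range_neg_one_pow_mul_choose_div k _ hP_pos.ne', hP]
    _ = 1 / (k * 2 ^ (k - 1) * ((2 * k).choose k)) := by
        field_simp
end

section
/- Let b > 1 be a real number, L ≥ 1 an integer, T_L the degree-L Chebyshev polynomial of the first kind with real coefficients, and define the real polynomial P_L(x) = −T_L((2x−(b²+1))/(b²−1)) / T_L(−(b²+1)/(b²−1)) (the denominator is nonzero). Then P_L(0) = −1, and for every real x with 1 ≤ x ≤ b² one has |P_L(x)| ≤ ε, where ε = |T_L(−(b²+1)/(b²−1))|^{−1} ≤ 2·((b−1)/(b+1))^L. -/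
/-!
Put `r = (b + 1) / (b - 1) > 1`. Then `(b² + 1) / (b² - 1) = (r + r⁻¹) / 2 = cosh (log r)`, so
`|T_L(-(b² + 1) / (b² - 1))| = cosh (L log r) = (r ^ L + r⁻¹ ^ L) / 2 ≥ r ^ L / 2`, which gives
`ε ≤ 2 r⁻¹ ^ L`. On `[1, b²]` the affine argument of `T_L` stays in `[-1, 1]`, where `|T_L| ≤ 1`.
-/

open Polynomial Polynomial.Chebyshev Real

theorem Polynomial.Chebyshev.abs_eval_T_neg {R : Type*} [CommRing R] [LinearOrder R]
    [IsStrictOrderedRing R] (n : ℤ) (x : R) : |(T R n).eval (-x)| = |(T R n).eval x| := by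
  rw [T_eval_neg, abs_mul, ← Int.cast_abs, Int.abs_negOnePow, Int.cast_one, one_mul]

theorem Polynomial.Chebyshev.T_real_half_add_inv (n : ℤ) {r : ℝ} (hr : 0 < r) :
    (T ℝ n).eval ((r + r⁻¹) / 2) = (r ^ n + r⁻¹ ^ n) / 2 := by
  rw [← cosh_log hr, T_real_cosh, cosh_eq, exp_neg, mul_comm, ← rpow_def_of_pos hr, rpow_intCast,
    inv_zpow]

theorem Polynomial.Chebyshev.pow_div_two_le_abs_T_real_neg_half_add_inv (n : ℕ) {r : ℝ}
    (hr : 0 < r) : r ^ n / 2 ≤ |(T ℝ n).eval (-((r + r⁻¹) / 2))| := by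
  have hT := T_real_half_add_inv n hr
  rw [zpow_natCast, zpow_natCast] at hT
  rw [abs_eval_T_neg, hT, abs_of_pos (by positivity)]
  linarith [pow_pos (inv_pos.mpr hr) n]

theorem affine_mem_Icc_neg_one_one {a c x : ℝ} (hac : a < c) (hx : x ∈ Set.Icc a c) :
    (2 * x - (a + c)) / (c - a) ∈ Set.Icc (-1) 1 := by
  have hca : 0 < c - a := sub_pos.mpr hac
  rw [Set.mem_Icc, le_div_iff₀ hca, div_le_iff₀ hca]
  constructor <;> linarith [hx.1, hx.2]

theorem shifted_chebyshev_properties_general (L : ℕ) (b : ℝ) (hb : 1 < b) :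
    (Polynomial.Chebyshev.T ℝ L).eval (-(b ^ 2 + 1) / (b ^ 2 - 1)) ≠ 0 ∧
    (-(Polynomial.Chebyshev.T ℝ L).eval ((2 * 0 - (b ^ 2 + 1)) / (b ^ 2 - 1)) /
        (Polynomial.Chebyshev.T ℝ L).eval (-(b ^ 2 + 1) / (b ^ 2 - 1)) = -1) ∧
    (∀ x : ℝ, 1 ≤ x → x ≤ b ^ 2 →
      |-(Polynomial.Chebyshev.T ℝ L).eval ((2 * x - (b ^ 2 + 1)) / (b ^ 2 - 1)) /
          (Polynomial.Chebyshev.T ℝ L).eval (-(b ^ 2 + 1) / (b ^ 2 - 1))| ≤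
        |(Polynomial.Chebyshev.T ℝ L).eval (-(b ^ 2 + 1) / (b ^ 2 - 1))|⁻¹) ∧
    |(Polynomial.Chebyshev.T ℝ L).eval (-(b ^ 2 + 1) / (b ^ 2 - 1))|⁻¹ ≤
      2 * ((b - 1) / (b + 1)) ^ L := by
  set r := (b + 1) / (b - 1)
  have hr : 0 < r := div_pos (by linarith) (by linarith)
  have hcenter : -(b ^ 2 + 1) / (b ^ 2 - 1) = -((r + r⁻¹) / 2) := by
    have : b - 1 ≠ 0 := by linarith
    have : b + 1 ≠ 0 := by linarith
    have : b ^ 2 - 1 ≠ 0 := by nlinarith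
    simp only [r, inv_div]
    field_simp
    ring
  have hD : r ^ L / 2 ≤ |(T ℝ L).eval (-(b ^ 2 + 1) / (b ^ 2 - 1))| := by
    rw [hcenter]
    exact pow_div_two_le_abs_T_real_neg_half_add_inv L hr
  set D := (T ℝ L).eval (-(b ^ 2 + 1) / (b ^ 2 - 1))
  have hDpos : 0 < |D| := lt_of_lt_of_le (by positivity) hD
  have hDne : D ≠ 0 := abs_pos.mp hDpos
  refine ⟨hDne, ?_, fun x hx1 hx2 => ?_, ?_⟩
  · rw [mul_zero, zero_sub, neg_div, div_self hDne]
  · have harg := affine_mem_Icc_neg_one_one (by nlinarith) ⟨hx1, hx2⟩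
    rw [add_comm 1] at harg
    have hmem := eval_T_real_mem_Icc L harg
    rw [abs_div, abs_neg, div_eq_mul_inv]
    exact mul_le_of_le_one_left (inv_nonneg.mpr hDpos.le) (abs_le.mpr hmem)
  · calc |D|⁻¹ ≤ (r ^ L / 2)⁻¹ := inv_anti₀ (by positivity) hD
      _ = 2 * ((b - 1) / (b + 1)) ^ L := by rw [inv_div, div_eq_mul_inv, ← inv_pow, inv_div]

/-- Properties of the shifted and scaled Chebyshev polynomial
`P_L(x) = -T_L((2x-(b²+1))/(b²-1)) / T_L(-(b²+1)/(b²-1))`: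
the denominator is nonzero, `P_L(0) = -1`, `|P_L(x)| ≤ ε` for `1 ≤ x ≤ b²`, and
`ε = |T_L(-(b²+1)/(b²-1))|⁻¹ ≤ 2·((b-1)/(b+1))^L`. -/
theorem shifted_chebyshev_properties (L : ℕ) (hL : 1 ≤ L) (b : ℝ) (hb : 1 < b) :
    (Polynomial.Chebyshev.T ℝ L).eval (-(b ^ 2 + 1) / (b ^ 2 - 1)) ≠ 0 ∧
    (-(Polynomial.Chebyshev.T ℝ L).eval ((2 * 0 - (b ^ 2 + 1)) / (b ^ 2 - 1)) /
        (Polynomial.Chebyshev.T ℝ L).eval (-(b ^ 2 + 1) / (b ^ 2 - 1)) = -1) ∧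
    (∀ x : ℝ, 1 ≤ x → x ≤ b ^ 2 →
      |-(Polynomial.Chebyshev.T ℝ L).eval ((2 * x - (b ^ 2 + 1)) / (b ^ 2 - 1)) /
          (Polynomial.Chebyshev.T ℝ L).eval (-(b ^ 2 + 1) / (b ^ 2 - 1))| ≤
        |(Polynomial.Chebyshev.T ℝ L).eval (-(b ^ 2 + 1) / (b ^ 2 - 1))|⁻¹) ∧
    |(Polynomial.Chebyshev.T ℝ L).eval (-(b ^ 2 + 1) / (b ^ 2 - 1))|⁻¹ ≤
      2 * ((b - 1) / (b + 1)) ^ L :=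
  shifted_chebyshev_properties_general L b hb
end

section
/- Let b > 1 be a real number, L ≥ 1 an integer, and let a_0, a_1, …, a_L be the coefficients of the polynomial P_L(x) = −T_L((2x−(b²+1))/(b²−1)) / T_L(−(b²+1)/(b²−1)) (with a_k = 0 for k > L), and set ε = |T_L(−(b²+1)/(b²−1))|^{−1}. Let N > 0 and c > 0 be reals, and let p > 0 be a real with 1 ≤ p·c ≤ b². If X is a Poisson random variable with rate N·p (i.e., ℙ(X = k) = e^{−Np}(Np)^k/k! for k ∈ ℕ), then the estimator S̃ = 1 + a_X · c^X · X! / N^X satisfies E[S̃] = 1 + e^{−Np} · P_L(p·c), and consequently E[S̃] ∈ [1−ε, 1+ε]. -/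
/-!
Splitting the estimator, `E[S̃] = ∑ₖ e^{-Np}(Np)^k/k! + e^{-Np} ∑ₖ a_k (pc)^k`: the factor
`k!/N^k` cancels the Poisson weight, so the first sum is the total Poisson mass `1` and the second
is the (finite) Taylor sum `P_L(pc)`. The affine change of variables maps `[1, b²]` onto `[-1, 1]`,
where `|T_L| ≤ 1`, so `|e^{-Np} P_L(pc)| ≤ |P_L(pc)| ≤ |T_L(-(b²+1)/(b²-1))|⁻¹`.
-/

open Polynomial

theorem abs_affine_le_one_of_mem_Icc {lo hi x : ℝ} (hlt : lo < hi) (hx : x ∈ Set.Icc lo hi) :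
    |(hi - lo)⁻¹ * (2 * x - (hi + lo))| ≤ 1 := by
  have hpos : 0 < hi - lo := sub_pos.mpr hlt
  rw [abs_mul, abs_inv, abs_of_pos hpos, inv_mul_le_iff₀ hpos, mul_one, abs_le]
  constructor <;> linarith [hx.1, hx.2]

namespace Polynomial

theorem hasSum_coeff_mul_pow {R : Type*} [Semiring R] [TopologicalSpace R] (P : R[X])
    (x : R) : HasSum (fun k : ℕ ↦ P.coeff k * x ^ k) (P.eval x) := by
  rw [eval_eq_sum_range]
  refine hasSum_sum_of_ne_finset_zero fun k hk ↦ ?_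
  rw [P.coeff_eq_zero_of_natDegree_lt (by simpa using hk), zero_mul]

/-- The Chebyshev polynomial `T_n` transported to `[lo, hi]` and normalised to take the value
`-1` at `0`. -/
noncomputable def shiftedChebyshev (n : ℤ) (lo hi : ℝ) : ℝ[X] :=
  C (-((Chebyshev.T ℝ n).eval (-(hi + lo) / (hi - lo)))⁻¹) *
    (Chebyshev.T ℝ n).comp (C ((hi - lo)⁻¹) * (C 2 * X - C (hi + lo)))

theorem abs_eval_shiftedChebyshev_le (n : ℤ) {lo hi x : ℝ} (hlt : lo < hi)
    (hx : x ∈ Set.Icc lo hi) :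
    |(shiftedChebyshev n lo hi).eval x| ≤ |(Chebyshev.T ℝ n).eval (-(hi + lo) / (hi - lo))|⁻¹ := by
  have hT := Chebyshev.abs_eval_T_real_le_one n (abs_affine_le_one_of_mem_Icc hlt hx)
  simp only [shiftedChebyshev, eval_mul, eval_C, eval_comp, eval_sub, eval_X, abs_mul, abs_neg,
    abs_inv]
  exact mul_le_of_le_one_right (by positivity) hT

end Polynomial

theorem hasSum_poisson_mul_one_add_coeff (P : ℝ[X]) {N : ℝ} (hN : N ≠ 0) (p c : ℝ) :
    HasSum (fun k : ℕ ↦ (Real.exp (-(N * p)) * (N * p) ^ k / (k.factorial : ℝ)) *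
        (1 + P.coeff k * c ^ k * (k.factorial : ℝ) / N ^ k))
      (1 + Real.exp (-(N * p)) * P.eval (p * c)) := by
  have hsplit : ∀ k : ℕ, (Real.exp (-(N * p)) * (N * p) ^ k / (k.factorial : ℝ)) *
      (1 + P.coeff k * c ^ k * (k.factorial : ℝ) / N ^ k) =
        Real.exp (-(N * p)) * ((N * p) ^ k / (k.factorial : ℝ)) +
          Real.exp (-(N * p)) * (P.coeff k * (p * c) ^ k) := fun k ↦ by
    field_simp
    ring
  have hmass : Real.exp (-(N * p)) * Real.exp (N * p) = 1 := by
    rw [← Real.exp_add, neg_add_cancel, Real.exp_zero]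
  simp_rw [hsplit]
  rw [← hmass]
  refine HasSum.add ?_ ((P.hasSum_coeff_mul_pow (p * c)).mul_left _)
  rw [Real.exp_eq_exp_ℝ]
  exact (NormedSpace.expSeries_div_hasSum_exp (N * p)).mul_left _

theorem poisson_estimator_bias_general (L : ℕ) (b : ℝ) (hb : 1 < b)
    (N c p : ℝ) (hN : 0 < N) (hp : 0 < p)
    (hpc1 : 1 ≤ p * c) (hpc2 : p * c ≤ b ^ 2) :
    letI d : ℝ := (Polynomial.Chebyshev.T ℝ L).eval (-(b ^ 2 + 1) / (b ^ 2 - 1))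
    letI PL : Polynomial ℝ :=
      C (-d⁻¹) * (Polynomial.Chebyshev.T ℝ L).comp
        (C ((b ^ 2 - 1)⁻¹) * (C 2 * X - C (b ^ 2 + 1)))
    letI ε : ℝ := |d|⁻¹
    (∑' k : ℕ, (Real.exp (-(N * p)) * (N * p) ^ k / (k.factorial : ℝ)) *
        (1 + PL.coeff k * c ^ k * (k.factorial : ℝ) / N ^ k)) =
      1 + Real.exp (-(N * p)) * PL.eval (p * c) ∧
    1 + Real.exp (-(N * p)) * PL.eval (p * c) ∈ Set.Icc (1 - ε) (1 + ε) := by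
  have hbound : |(shiftedChebyshev L 1 (b ^ 2)).eval (p * c)| ≤
      |(Chebyshev.T ℝ L).eval (-(b ^ 2 + 1) / (b ^ 2 - 1))|⁻¹ :=
    abs_eval_shiftedChebyshev_le L (by nlinarith) ⟨hpc1, hpc2⟩
  have hdamp : Real.exp (-(N * p)) ≤ 1 := Real.exp_le_one_iff.mpr (by nlinarith)
  refine ⟨(hasSum_poisson_mul_one_add_coeff (shiftedChebyshev L 1 (b ^ 2)) hN.ne' p c).tsum_eq,
    Set.mem_Icc_iff_abs_le.mp ?_⟩
  rw [sub_add_cancel_left, abs_neg, abs_mul, abs_of_pos (Real.exp_pos _)]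
  exact (mul_le_of_le_one_left (abs_nonneg _) hdamp).trans hbound

/-- Bias computation: with `a_k` the coefficients of the shifted Chebyshev polynomial
`P_L` and `X ~ Poisson(N·p)` (so `ℙ(X = k) = e^{-Np}(Np)^k/k!`), the estimator
`S̃ = 1 + a_X · c^X · X! / N^X` has expectation `1 + e^{-Np}·P_L(p·c)`, which lies in
`[1-ε, 1+ε]` whenever `1 ≤ p·c ≤ b²`, where `ε = |T_L(-(b²+1)/(b²-1))|⁻¹`. -/
theorem poisson_estimator_bias (L : ℕ) (hL : 1 ≤ L) (b : ℝ) (hb : 1 < b)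
    (N c p : ℝ) (hN : 0 < N) (hc : 0 < c) (hp : 0 < p)
    (hpc1 : 1 ≤ p * c) (hpc2 : p * c ≤ b ^ 2) :
    letI d : ℝ := (Polynomial.Chebyshev.T ℝ L).eval (-(b ^ 2 + 1) / (b ^ 2 - 1))
    letI PL : Polynomial ℝ :=
      C (-d⁻¹) * (Polynomial.Chebyshev.T ℝ L).comp
        (C ((b ^ 2 - 1)⁻¹) * (C 2 * X - C (b ^ 2 + 1)))
    letI ε : ℝ := |d|⁻¹
    (∑' k : ℕ, (Real.exp (-(N * p)) * (N * p) ^ k / (k.factorial : ℝ)) *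
        (1 + PL.coeff k * c ^ k * (k.factorial : ℝ) / N ^ k)) =
      1 + Real.exp (-(N * p)) * PL.eval (p * c) ∧
    1 + Real.exp (-(N * p)) * PL.eval (p * c) ∈ Set.Icc (1 - ε) (1 + ε) :=
  poisson_estimator_bias_general L b hb N c p hN hp hpc1 hpc2
end

section
/- Let b > 1, N > 0, c > 0, p > 0 be reals with p·c ≤ b² and c ≥ 1, let L ≥ 1 be an integer, and let a_0, …, a_L be reals with |a_k| ≤ A for all 0 ≤ k ≤ L. Set λ = N·p. Then ∑_{k=0}^{L} (e^{−λ} λ^k / k!) · (a_k · c^k · k! / N^k)² ≤ A² · ∑_{k=0}^{L} (b² · c · k / N)^k, with the convention 0^0 = 1. -/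
/-! Term by term: after cancelling, the `k`-th summand is `e^{-Np} a_k² · k! (pc·c/N)^k`, and
`e^{-Np} ≤ 1`, `a_k² ≤ A²`, `k! ≤ k^k`, `pc ≤ b²`. -/

open Nat in
theorem factorial_mul_pow_le_mul_pow (k : ℕ) {x : ℝ} (hx : 0 ≤ x) :
    (k ! : ℝ) * x ^ k ≤ (k * x) ^ k := by
  rw [mul_pow]
  gcongr
  exact_mod_cast factorial_le_pow k

open Nat in
theorem poisson_weight_mul_sq_eq (k : ℕ) {N : ℝ} (hN : N ≠ 0) (p c a : ℝ) :
    Real.exp (-(N * p)) * (N * p) ^ k / (k ! : ℝ) * (a * c ^ k * (k ! : ℝ) / N ^ k) ^ 2 =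
      Real.exp (-(N * p)) * a ^ 2 * ((k ! : ℝ) * (p * c * c / N) ^ k) := by
  have hfact : (k ! : ℝ) ≠ 0 := by positivity
  have hNk : N ^ k ≠ 0 := pow_ne_zero k hN
  rw [div_pow, div_pow]
  field_simp
  ring

open Nat in
theorem poisson_weight_mul_sq_le (k : ℕ) {N p c B a A : ℝ} (hN : 0 < N) (hp : 0 ≤ p)
    (hc : 0 ≤ c) (hpc : p * c ≤ B) (ha : |a| ≤ A) :
    Real.exp (-(N * p)) * (N * p) ^ k / (k ! : ℝ) * (a * c ^ k * (k ! : ℝ) / N ^ k) ^ 2 ≤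
      A ^ 2 * (B * c * k / N) ^ k := by
  rw [poisson_weight_mul_sq_eq k hN.ne']
  have hexp : Real.exp (-(N * p)) ≤ 1 := Real.exp_le_one_iff.mpr (neg_nonpos.mpr (by positivity))
  have ha2 : a ^ 2 ≤ A ^ 2 := sq_le_sq' (abs_le.mp ha).1 (abs_le.mp ha).2
  have hmoment : (k ! : ℝ) * (p * c * c / N) ^ k ≤ (B * c * k / N) ^ k :=
    calc (k ! : ℝ) * (p * c * c / N) ^ k ≤ (k * (p * c * c / N)) ^ k :=
          factorial_mul_pow_le_mul_pow k (by positivity)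
      _ ≤ (B * c * k / N) ^ k := by
          gcongr
          rw [mul_div_assoc', mul_comm (k : ℝ)]
          gcongr
  calc Real.exp (-(N * p)) * a ^ 2 * ((k ! : ℝ) * (p * c * c / N) ^ k)
      ≤ 1 * A ^ 2 * (B * c * k / N) ^ k := by gcongr
    _ = A ^ 2 * (B * c * k / N) ^ k := by ring

theorem poisson_estimator_variance_bound_general (L : ℕ) (b N c p A : ℝ)
    (hN : 0 < N) (hc0 : 0 < c) (hp : 0 < p)
    (hpc : p * c ≤ b ^ 2) (a : ℕ → ℝ) (ha : ∀ k ≤ L, |a k| ≤ A) :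
    ∑ k ∈ Finset.range (L + 1),
        (Real.exp (-(N * p)) * (N * p) ^ k / (k.factorial : ℝ)) *
          (a k * c ^ k * (k.factorial : ℝ) / N ^ k) ^ 2 ≤
      A ^ 2 * ∑ k ∈ Finset.range (L + 1), (b ^ 2 * c * k / N) ^ k := by
  rw [Finset.mul_sum]
  refine Finset.sum_le_sum fun k hk => ?_
  exact poisson_weight_mul_sq_le k hN hp.le hc0.le hpc (ha k (Finset.mem_range_succ_iff.mp hk))

/-- Second-moment (variance) bound from the proof of Theorem 1: for `λ = N·p`,
`∑_{k=0}^{L} (e^{-λ} λ^k / k!) · (a_k · c^k · k! / N^k)² ≤ A² · ∑_{k=0}^{L} (b²·c·k/N)^k`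
(with the convention `0^0 = 1`). -/
theorem poisson_estimator_variance_bound (L : ℕ) (hL : 1 ≤ L) (b N c p A : ℝ)
    (hb : 1 < b) (hN : 0 < N) (hc0 : 0 < c) (hc : 1 ≤ c) (hp : 0 < p)
    (hpc : p * c ≤ b ^ 2) (a : ℕ → ℝ) (ha : ∀ k ≤ L, |a k| ≤ A) :
    ∑ k ∈ Finset.range (L + 1),
        (Real.exp (-(N * p)) * (N * p) ^ k / (k.factorial : ℝ)) *
          (a k * c ^ k * (k.factorial : ℝ) / N ^ k) ^ 2 ≤
      A ^ 2 * ∑ k ∈ Finset.range (L + 1), (b ^ 2 * c * k / N) ^ k :=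
  poisson_estimator_variance_bound_general L b N c p A hN hc0 hp hpc a ha
end

section
/- Let n ≥ 1 be an integer, let p : {1,…,n} → ℝ be a probability distribution (p_i ≥ 0 and ∑_i p_i = 1), let ε > 0, and let Π : {1,…,n} → ℝ satisfy Π_i ≥ 1/n for all i and ∑_{i=1}^{n} |p_i − Π_i| ≤ ε/2. Let S = #{i : p_i ≠ 0} denote the support size of p. Then |∑_{i=1}^{n} p_i / Π_i − S| ≤ (ε/2) · n. In other words, the expectation over i ∼ p of 1/Π_i lies in [S − (ε/2)n, S + (ε/2)n]. -/
open Finset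

lemma abs_div_sub_ite_ne_zero_le {a q N : ℝ} (hq : 0 < q) (hqN : q⁻¹ ≤ N) :
    |a / q - if a ≠ 0 then 1 else 0| ≤ N * |a - q| := by
  by_cases ha : a = 0
  · simp only [ha, zero_div, ne_eq, not_true_eq_false, if_false, sub_zero, abs_zero, zero_sub,
      abs_neg]
    exact mul_nonneg ((inv_pos.2 hq).le.trans hqN) (abs_nonneg q)
  · calc |a / q - if a ≠ 0 then 1 else 0| = q⁻¹ * |a - q| := by
          rw [if_pos ha, ← div_self hq.ne', ← sub_div, abs_div, abs_of_pos hq, div_eq_inv_mul]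
      _ ≤ N * |a - q| := mul_le_mul_of_nonneg_right hqN (abs_nonneg _)

theorem abs_sum_div_sub_card_support_le {ι : Type*} [Fintype ι] (p Q : ι → ℝ) {N : ℝ}
    (hQ : ∀ i, 0 < Q i) (hQN : ∀ i, (Q i)⁻¹ ≤ N) :
    |∑ i, p i / Q i - (#{i | p i ≠ 0} : ℝ)| ≤ N * ∑ i, |p i - Q i| := by
  rw [card_filter, Nat.cast_sum, ← sum_sub_distrib, mul_sum]
  refine (abs_sum_le_sum_abs _ _).trans (sum_le_sum fun i _ => ?_)
  push_cast
  exact abs_div_sub_ite_ne_zero_le (hQ i) (hQN i)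

theorem canonne_rubinfeld_bias_general (n : ℕ) (p Q : Fin n → ℝ) (ε : ℝ)
    (hQ : ∀ i, 1 / (n : ℝ) ≤ Q i)
    (hTV : ∑ i, |p i - Q i| ≤ ε / 2) :
    |∑ i, p i / Q i -
        ((Finset.univ.filter (fun i => p i ≠ 0)).card : ℝ)| ≤ ε / 2 * n := by
  have hn : ∀ i : Fin n, (0 : ℝ) < n := fun i => Nat.cast_pos.2 i.pos
  have hQpos : ∀ i, 0 < Q i := fun i => (one_div_pos.2 (hn i)).trans_le (hQ i)
  have hQinv : ∀ i, (Q i)⁻¹ ≤ n := fun i => by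
    simpa using (one_div_le (hn i) (hQpos i)).1 (hQ i)
  calc _ ≤ n * ∑ i, |p i - Q i| := abs_sum_div_sub_card_support_le p Q hQpos hQinv
    _ ≤ n * (ε / 2) := mul_le_mul_of_nonneg_left hTV n.cast_nonneg
    _ = ε / 2 * n := mul_comm _ _

/-- Canonne–Rubinfeld estimator bias: if the predictor `Q` is pointwise at least `1/n`
and within `ℓ₁` distance `ε/2` of the true distribution `p`, then `∑ i, p i / Q i`
approximates the support size `S` up to additive error `(ε/2)·n`. -/
theorem canonne_rubinfeld_bias (n : ℕ) (hn : 1 ≤ n) (p Q : Fin n → ℝ) (ε : ℝ)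
    (hε : 0 < ε) (hp0 : ∀ i, 0 ≤ p i) (hp1 : ∑ i, p i = 1)
    (hQ : ∀ i, 1 / (n : ℝ) ≤ Q i)
    (hTV : ∑ i, |p i - Q i| ≤ ε / 2) :
    |∑ i, p i / Q i -
        ((Finset.univ.filter (fun i => p i ≠ 0)).card : ℝ)| ≤ ε / 2 * n :=
  canonne_rubinfeld_bias_general n p Q ε hQ hTV
end
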